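/- For complex x₁, x₂ with Re(x₁) > 1 and Re(x₂) > 1, and real m > 0: ∫_{-∞}^{∞} m^{-x₁-it} (1/(x₂ - it - 1/2)) Γ(x₁ + it) Γ(x₂ + 1/2 - it) dt = (1/(x₁ + x₂ - 1/2)) · 2π Γ(x₁ + x₂ + 1/2) / (m+1)^{x₁+x₂-1/2}. -/

import Mathlib

/-!
Write `Γ(b - it) = ∫₀^∞ x^(b-it-1) e^(-x) dx` and exchange the two integrals. For fixed `x > 0`
the `t`-integral is Mellin inversion for `e^(-x)` at the point `m x`,
`∫ (m x)^(-(a+it)) Γ(a+it) dt = 2π e^(-m x)`, and what remains is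
`2π ∫₀^∞ x^(a+b-1) e^(-(m+1)x) dx = 2π Γ(a+b) / (m+1)^(a+b)`. The theorem is the case `a = x₁`,
`b = x₂ - 1/2`, because `Γ(x₂ + 1/2 - it) = (x₂ - 1/2 - it) Γ(x₂ - 1/2 - it)`.
Fubini and Mellin inversion need `t ↦ Γ(a+it)` integrable; for `Re a ≥ 1` this follows from
`Γ(s+2) = s(s+1)Γ(s)` and `|Γ(s)| ≤ Γ(Re s)`, which give `|Γ(a+it)| = O(1/(1+t²))`.
-/

open Complex Real MeasureTheory Set

namespace Complex

theorem norm_Gamma_le_Gamma_re {s : ℂ} (hs : 0 < s.re) : ‖Gamma s‖ ≤ Real.Gamma s.re := by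
  rw [Gamma_eq_integral hs, Real.Gamma_eq_integral hs, GammaIntegral]
  refine (norm_integral_le_integral_norm _).trans_eq
    (setIntegral_congr_fun measurableSet_Ioi fun x hx => ?_)
  simp [norm_cpow_eq_rpow_re_of_pos hx, Complex.norm_exp]

theorem norm_Gamma_le_div_one_add_sq {s : ℂ} (hs : 1 ≤ s.re) :
    ‖Gamma s‖ ≤ Real.Gamma (s.re + 2) / (1 + s.im ^ 2) := by
  have hs0 : s ≠ 0 := fun h => by simp [h] at hs; linarith
  have hs1 : s + 1 ≠ 0 := fun h => by have := congrArg re h; simp at this; linarith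
  have one_add_sq_le : ∀ z : ℂ, 1 ≤ z.re → 1 + z.im ^ 2 ≤ ‖z‖ ^ 2 := fun z hz => by
    rw [Complex.sq_norm, normSq_apply]; nlinarith
  have hden : 1 + s.im ^ 2 ≤ ‖s‖ * ‖s + 1‖ := by
    have h1 := one_add_sq_le s hs
    have h2 := one_add_sq_le (s + 1) (by simp; linarith)
    simp only [add_im, one_im, add_zero] at h2
    refine (pow_le_pow_iff_left₀ (by positivity) (by positivity) two_ne_zero).1 ?_
    rw [mul_pow, sq]
    exact mul_le_mul h1 h2 (by positivity) (by positivity)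
  have hrec : ‖Gamma (s + 2)‖ = ‖Gamma s‖ * (‖s‖ * ‖s + 1‖) := by
    rw [show s + 2 = s + 1 + 1 by ring, Gamma_add_one _ hs1, Gamma_add_one _ hs0]
    simp only [norm_mul]; ring
  have hnum : ‖Gamma (s + 2)‖ ≤ Real.Gamma (s.re + 2) := by
    simpa using norm_Gamma_le_Gamma_re (s := s + 2) (by simp; linarith)
  rw [le_div_iff₀ (by positivity)]
  calc ‖Gamma s‖ * (1 + s.im ^ 2) ≤ ‖Gamma s‖ * (‖s‖ * ‖s + 1‖) := by gcongr
    _ ≤ Real.Gamma (s.re + 2) := hrec ▸ hnum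

theorem continuous_Gamma_vertical {a : ℂ} (ha : 0 < a.re) :
    Continuous fun t : ℝ => Gamma (a + t * I) := by
  refine continuous_iff_continuousAt.2 fun t => ContinuousAt.comp ?_ (by fun_prop)
  refine continuousAt_Gamma _ fun n h => ?_
  have := congrArg re h
  simp at this
  linarith [n.cast_nonneg (α := ℝ)]

theorem integrable_Gamma_vertical {a : ℂ} (ha : 1 ≤ a.re) :
    Integrable fun t : ℝ => Gamma (a + t * I) := by
  have hbound : Integrable fun t : ℝ => Real.Gamma (a.re + 2) * (1 + (t + a.im) ^ 2)⁻¹ :=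
    (integrable_inv_one_add_sq.comp_add_right a.im).const_mul _
  refine hbound.mono' (continuous_Gamma_vertical (by linarith)).aestronglyMeasurable
    (.of_forall fun t => ?_)
  simpa [div_eq_mul_inv, add_comm] using norm_Gamma_le_div_one_add_sq (s := a + t * I) (by simpa)

theorem mellin_exp_neg {s : ℂ} (hs : 0 < s.re) :
    mellin (fun x : ℝ => (Real.exp (-x) : ℂ)) s = Gamma s := by
  rw [← GammaIntegral_eq_mellin, Gamma_eq_integral hs]

theorem integral_cpow_neg_mul_Gamma {a : ℂ} (ha : 1 ≤ a.re) {x : ℝ} (hx : 0 < x) :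
    ∫ t : ℝ, (x : ℂ) ^ (-(a + t * I)) * Gamma (a + t * I) = 2 * π * Real.exp (-x) := by
  have hconv : MellinConvergent (fun x : ℝ => (Real.exp (-x) : ℂ)) a.re := by
    simpa [MellinConvergent, mul_comm] using
      GammaIntegral_convergent (s := a.re) (by simp; linarith)
  have hvert : VerticalIntegrable (mellin fun x : ℝ => (Real.exp (-x) : ℂ)) a.re := by
    refine (integrable_Gamma_vertical (a := a.re) (by simpa)).congr (.of_forall fun t => ?_)
    exact (mellin_exp_neg (by simp; linarith)).symm
  have key := mellinInv_mellin_eq a.re _ hx hconv hvert (by fun_prop)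
  have hline : ∀ t : ℝ, a + t * I = a.re + ↑(t + a.im) * I := fun t => by
    apply Complex.ext <;> simp [add_comm]
  simp only [hline]
  rw [integral_add_right_eq_self
    (fun t : ℝ => (x : ℂ) ^ (-(a.re + t * I)) * Gamma (a.re + t * I))]
  have hmellin : ∀ t : ℝ, mellin (fun x : ℝ => (Real.exp (-x) : ℂ)) (a.re + t * I)
      = Gamma (a.re + t * I) := fun t => mellin_exp_neg (by simp; linarith)
  simp only [mellinInv, hmellin, smul_eq_mul] at key
  have h2π : (2 * π : ℂ) * ((1 / (2 * π) : ℝ) : ℂ) = 1 := by push_cast; field_simp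
  rw [← key, real_smul, ← mul_assoc, h2π, one_mul]

theorem integrable_cpow_mul_Gamma_mul_cpow_mul_exp {a b : ℂ} (ha : 1 ≤ a.re) (hb : 0 < b.re)
    {m : ℝ} (hm : 0 < m) :
    Integrable (fun p : ℝ × ℝ => (m : ℂ) ^ (-a - p.1 * I) * Gamma (a + p.1 * I) *
      ((p.2 : ℂ) ^ (b - p.1 * I - 1) * Real.exp (-p.2)))
      (volume.prod (volume.restrict (Ioi 0))) := by
  have hbound := ((integrable_Gamma_vertical ha).norm.const_mul (m ^ (-a.re))).mul_prod
    (GammaIntegral_convergent hb).norm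
  have hfst : Continuous fun t : ℝ => (m : ℂ) ^ (-a - t * I) * Gamma (a + t * I) :=
    ((by fun_prop : Continuous fun t : ℝ => -a - t * I).const_cpow
      (.inl (ofReal_ne_zero.2 hm.ne'))).mul (continuous_Gamma_vertical (by linarith))
  have hsnd : Measurable fun p : ℝ × ℝ => (p.2 : ℂ) ^ (b - p.1 * I - 1) * Real.exp (-p.2) := by
    fun_prop
  refine hbound.mono' (hfst.aestronglyMeasurable.comp_fst.mul hsnd.aestronglyMeasurable) ?_
  filter_upwards [Measure.quasiMeasurePreserving_snd.ae (ae_restrict_mem measurableSet_Ioi)]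
    with ⟨t, x⟩ (hx : 0 < x)
  simp [norm_cpow_eq_rpow_re_of_pos hm, norm_cpow_eq_rpow_re_of_pos hx, mul_comm]

theorem integral_cpow_mul_Gamma_mul_cpow_mul_exp {a b : ℂ} (ha : 1 ≤ a.re) {m x : ℝ}
    (hm : 0 < m) (hx : 0 < x) :
    ∫ t : ℝ, (m : ℂ) ^ (-a - t * I) * Gamma (a + t * I) *
        ((x : ℂ) ^ (b - t * I - 1) * Real.exp (-x))
      = 2 * π * ((x : ℂ) ^ (a + b - 1) * exp (-((m + 1 : ℝ) * x))) := by
  have hsplit : ∀ t : ℝ, (m : ℂ) ^ (-a - t * I) * (x : ℂ) ^ (b - t * I - 1)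
      = ((m * x : ℝ) : ℂ) ^ (-(a + t * I)) * (x : ℂ) ^ (a + b - 1) := fun t => by
    rw [ofReal_mul, mul_cpow_ofReal_nonneg hm.le hx.le, mul_assoc,
      ← cpow_add _ _ (ofReal_ne_zero.2 hx.ne')]
    ring_nf
  have hrearrange : ∀ t : ℝ, (m : ℂ) ^ (-a - t * I) * Gamma (a + t * I) *
      ((x : ℂ) ^ (b - t * I - 1) * Real.exp (-x))
      = ((m * x : ℝ) : ℂ) ^ (-(a + t * I)) * Gamma (a + t * I) *
        ((x : ℂ) ^ (a + b - 1) * Real.exp (-x)) := fun t => by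
    linear_combination (Gamma (a + t * I) * Real.exp (-x)) * hsplit t
  simp_rw [hrearrange]
  rw [integral_mul_const, integral_cpow_neg_mul_Gamma ha (mul_pos hm hx)]
  push_cast
  rw [show -(((m : ℂ) + 1) * x) = -(m * x) + -x by ring, exp_add]
  ring

theorem integral_cpow_mul_Gamma_mul_Gamma {a b : ℂ} (ha : 1 ≤ a.re) (hb : 0 < b.re)
    {m : ℝ} (hm : 0 < m) :
    ∫ t : ℝ, (m : ℂ) ^ (-a - t * I) * Gamma (a + t * I) * Gamma (b - t * I)
      = 2 * π * Gamma (a + b) / ((m + 1 : ℝ) : ℂ) ^ (a + b) := by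
  have hGamma : ∀ t : ℝ, Gamma (b - t * I)
      = ∫ x in Ioi (0 : ℝ), (x : ℂ) ^ (b - t * I - 1) * Real.exp (-x) := fun t => by
    rw [Gamma_eq_integral (by simpa using hb), GammaIntegral]
    simp_rw [mul_comm]
  have harg : ((m + 1 : ℝ) : ℂ).arg ≠ π := by
    rw [arg_ofReal_of_nonneg (by positivity)]; exact pi_ne_zero.symm
  calc ∫ t : ℝ, (m : ℂ) ^ (-a - t * I) * Gamma (a + t * I) * Gamma (b - t * I)
      = ∫ t : ℝ, ∫ x in Ioi (0 : ℝ), (m : ℂ) ^ (-a - t * I) * Gamma (a + t * I) *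
          ((x : ℂ) ^ (b - t * I - 1) * Real.exp (-x)) := by
        simp_rw [hGamma, integral_const_mul]
    _ = ∫ x in Ioi (0 : ℝ), ∫ t : ℝ, (m : ℂ) ^ (-a - t * I) * Gamma (a + t * I) *
          ((x : ℂ) ^ (b - t * I - 1) * Real.exp (-x)) :=
        integral_integral_swap (integrable_cpow_mul_Gamma_mul_cpow_mul_exp ha hb hm)
    _ = 2 * π * ∫ x in Ioi (0 : ℝ), (x : ℂ) ^ (a + b - 1) * exp (-((m + 1 : ℝ) * x)) := by
        rw [setIntegral_congr_fun measurableSet_Ioi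
          fun x hx => integral_cpow_mul_Gamma_mul_cpow_mul_exp ha hm hx, integral_const_mul]
    _ = 2 * π * Gamma (a + b) / ((m + 1 : ℝ) : ℂ) ^ (a + b) := by
        rw [integral_cpow_mul_exp_neg_mul_Ioi (by simp; linarith) (by positivity), one_div,
          inv_cpow _ _ harg]
        ring

end Complex

theorem stmt6 (x₁ x₂ : ℂ) (hx₁ : 1 < x₁.re) (hx₂ : 1 < x₂.re) (m : ℝ) (hm : 0 < m) :
    ∫ t : ℝ, (m : ℂ) ^ (-x₁ - t * Complex.I) * (1 / (x₂ - t * Complex.I - 1/2)) *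
        Complex.Gamma (x₁ + t * Complex.I) * Complex.Gamma (x₂ + 1/2 - t * Complex.I)
    = (1 / (x₁ + x₂ - 1/2)) * (2 * Real.pi * Complex.Gamma (x₁ + x₂ + 1/2) /
        ((m + 1 : ℝ) : ℂ) ^ (x₁ + x₂ - 1/2)) := by
  have hb : 0 < (x₂ - 1 / 2).re := by norm_num; linarith
  have hshift : ∀ t : ℝ, x₂ - 1 / 2 - t * I ≠ 0 := fun t h => by
    have := congrArg re h; norm_num at this; linarith
  have hsum : x₁ + (x₂ - 1 / 2) ≠ 0 := fun h => by
    have := congrArg re h; norm_num at this; linarith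
  have hintegrand : ∀ t : ℝ, (m : ℂ) ^ (-x₁ - t * I) * (1 / (x₂ - t * I - 1 / 2)) *
      Gamma (x₁ + t * I) * Gamma (x₂ + 1 / 2 - t * I)
      = (m : ℂ) ^ (-x₁ - t * I) * Gamma (x₁ + t * I) * Gamma (x₂ - 1 / 2 - t * I) := fun t => by
    rw [show x₂ + 1 / 2 - t * I = x₂ - 1 / 2 - t * I + 1 by ring,
      show x₂ - t * I - 1 / 2 = x₂ - 1 / 2 - t * I by ring, Gamma_add_one _ (hshift t)]
    have hw := hshift t
    generalize x₂ - 1 / 2 - t * I = w at hw ⊢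
    field_simp
  simp_rw [hintegrand]
  rw [integral_cpow_mul_Gamma_mul_Gamma hx₁.le hb hm,
    show x₁ + x₂ + 1 / 2 = x₁ + (x₂ - 1 / 2) + 1 by ring, Gamma_add_one _ hsum,
    show x₁ + x₂ - 1 / 2 = x₁ + (x₂ - 1 / 2) by ring]
  generalize x₁ + (x₂ - 1 / 2) = s at hsum ⊢
  field_simp
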